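/- Let f be real-analytic near its simple root α and let γ be a real constant. Define the one-parameter iteration map F(x) = x - [3/2 - f'(y(x))/(2 f'(x)) + γ·(f'(y(x))/f'(x) - 1)²]·f(x)/f'(x), where y(x) = x - f(x)/f'(x), for x near α with f'(x) ≠ 0. Then for every γ ∈ ℝ this method is of third order, and as x → α, F(x) - α = (1/2)·[(4 - 8γ)·c₂² + c₃]·(x - α)³ + O((x - α)⁴). -/

import Mathlib

/-!
Expand everything in powers of `e = x - α`. From `f = f'(α) (e + c₂ e² + c₃ e³) + O(e⁴)` and
`f' = f'(α) (1 + 2 c₂ e + 3 c₃ e²) + O(e³)` the Newton correction is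
`f / f' = e - c₂ e² + 2 (c₂² - c₃) e³ + O(e⁴)`, so `y - α = c₂ e² + O(e³)`, hence
`f'(y) = f'(α) (1 + 2 c₂² e²) + O(e³)` and `f'(y) / f'(x) = 1 - 2 c₂ e + (6 c₂² - 3 c₃) e² + O(e³)`.
The weight in brackets is then `1 + c₂ e + (4 γ c₂² - 3 c₂² + 3 c₃ / 2) e² + O(e³)`, and multiplying
it by the Newton correction cancels `x - α` up to the stated cubic term. Nothing but the two
expansions enters, so the argument is run for an arbitrary pair `f, g`, with `g` playing `f'`.
-/

open Filter Asymptotics Topology Nat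

section PowerBounds

variable {𝕜 : Type*} [NontriviallyNormedField 𝕜] {a : 𝕜} {n : ℕ}

lemma isBigO_sub_pow_of_eq_pow_mul {r q : 𝕜 → 𝕜} (hq : ContinuousAt q a)
    (h : ∀ x, r x = (x - a) ^ n * q x) : r =O[𝓝 a] fun x => (x - a) ^ n :=
  ((isBigO_refl _ _).mul (hq.tendsto.isBigO_one 𝕜)).congr (fun x => (h x).symm) fun _ => mul_one _

lemma isBigO_sub_pow_of_le {m : ℕ} (h : m ≤ n) :
    (fun x => (x - a) ^ n) =O[𝓝 a] fun x => (x - a) ^ m :=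
  isBigO_sub_pow_of_eq_pow_mul (q := fun x => (x - a) ^ (n - m)) (by fun_prop)
    fun x => by rw [← pow_add, Nat.add_sub_cancel' h]

lemma tendsto_of_isBigO_sub_pow {g P : 𝕜 → 𝕜} (hn : n ≠ 0) (hP : ContinuousAt P a)
    (h : (fun x => g x - P x) =O[𝓝 a] fun x => (x - a) ^ n) : Tendsto g (𝓝 a) (𝓝 (P a)) := by
  have hpow : Tendsto (fun x => (x - a) ^ n) (𝓝 a) (𝓝 0) := by
    have : ContinuousAt (fun x => (x - a) ^ n) a := by fun_prop
    simpa [zero_pow hn] using this.tendsto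
  simpa using (h.trans_tendsto hpow).add hP.tendsto

end PowerBounds

lemma Asymptotics.IsBigO.div_sub {β 𝕜 𝕜' : Type*} [NormedField 𝕜] [NormedField 𝕜']
    {l : Filter β} {g h T : β → 𝕜} {k : β → 𝕜'} {b : 𝕜} (hb : b ≠ 0) (hh : Tendsto h l (𝓝 b))
    (H : (fun x => g x - T x * h x) =O[l] k) : (fun x => g x / h x - T x) =O[l] k := by
  refine ((H.mul ((hh.inv₀ hb).isBigO_one 𝕜')).congr_right fun _ => mul_one _).congr' ?_ .rfl
  filter_upwards [hh.eventually_ne hb] with x hx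
  field_simp

theorem AnalyticAt.isBigO_sub_taylor {𝕜 : Type*} [NontriviallyNormedField 𝕜] [CompleteSpace 𝕜]
    [CharZero 𝕜] {f : 𝕜 → 𝕜} {a : 𝕜} (hf : AnalyticAt 𝕜 f a) (n : ℕ) :
    (fun x => f x - ∑ k ∈ Finset.range n, iteratedDeriv k f a / k ! * (x - a) ^ k)
      =O[𝓝 a] fun x => (x - a) ^ n := by
  have h := (hf.hasFPowerSeriesAt.isBigO_sub_partialSum_pow n).comp_tendsto
    (tendsto_sub_nhds_zero_iff.mpr (tendsto_id (x := 𝓝 a)))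
  refine isBigO_norm_right.mp ((h.congr_left fun x => ?_).congr_right fun x => ?_)
  · simp [FormalMultilinearSeries.partialSum, mul_comm]
  · simp

section NewtonExpansions

variable {𝕜 : Type*} [NontriviallyNormedField 𝕜] {f g : 𝕜 → 𝕜} {α a c₂ c₃ : 𝕜}

def newtonStep (f g : 𝕜 → 𝕜) (x : 𝕜) : 𝕜 := x - f x / g x

lemma tendsto_of_isBigO_sub_quadratic
    (hg : (fun x => g x - a * (1 + 2 * c₂ * (x - α) + 3 * c₃ * (x - α) ^ 2))
      =O[𝓝 α] fun x => (x - α) ^ 3) : Tendsto g (𝓝 α) (𝓝 a) := by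
  simpa using tendsto_of_isBigO_sub_pow three_ne_zero (by fun_prop) hg

lemma newton_correction_expansion (ha : a ≠ 0)
    (hf : (fun x => f x - a * ((x - α) + c₂ * (x - α) ^ 2 + c₃ * (x - α) ^ 3))
      =O[𝓝 α] fun x => (x - α) ^ 4)
    (hg : (fun x => g x - a * (1 + 2 * c₂ * (x - α) + 3 * c₃ * (x - α) ^ 2))
      =O[𝓝 α] fun x => (x - α) ^ 3) :
    (fun x => f x / g x - ((x - α) - c₂ * (x - α) ^ 2 + 2 * (c₂ ^ 2 - c₃) * (x - α) ^ 3))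
      =O[𝓝 α] fun x => (x - α) ^ 4 := by
  set U : 𝕜 → 𝕜 := fun x => (x - α) - c₂ * (x - α) ^ 2 + 2 * (c₂ ^ 2 - c₃) * (x - α) ^ 3
  have hU : U =O[𝓝 α] fun x => (x - α) ^ 1 :=
    isBigO_sub_pow_of_eq_pow_mul (q := fun x => 1 - c₂ * (x - α) + 2 * (c₂ ^ 2 - c₃) * (x - α) ^ 2)
      (by fun_prop) fun x => by ring
  have hpoly : (fun x => a * (((x - α) + c₂ * (x - α) ^ 2 + c₃ * (x - α) ^ 3)
      - U x * (1 + 2 * c₂ * (x - α) + 3 * c₃ * (x - α) ^ 2))) =O[𝓝 α] fun x => (x - α) ^ 4 :=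
    isBigO_sub_pow_of_eq_pow_mul
      (q := fun x => -a * (4 * c₂ ^ 3 - 7 * c₂ * c₃ + 6 * c₃ * (c₂ ^ 2 - c₃) * (x - α)))
      (by fun_prop) fun x => by ring
  refine IsBigO.div_sub ha (tendsto_of_isBigO_sub_quadratic hg) ?_
  exact ((hf.sub ((hU.mul hg).congr_right fun x => by ring)).add hpoly).congr_left
    fun x => by ring

lemma newtonStep_expansion
    (hu : (fun x => f x / g x - ((x - α) - c₂ * (x - α) ^ 2 + 2 * (c₂ ^ 2 - c₃) * (x - α) ^ 3))
      =O[𝓝 α] fun x => (x - α) ^ 4) :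
    (fun x => newtonStep f g x - α - c₂ * (x - α) ^ 2) =O[𝓝 α] fun x => (x - α) ^ 3 := by
  have hcubic := (isBigO_refl (fun x => (x - α) ^ 3) (𝓝 α)).const_mul_left (2 * (c₃ - c₂ ^ 2))
  exact ((hu.trans (isBigO_sub_pow_of_le (by norm_num))).neg_left.add hcubic).congr_left
    fun x => by simp only [newtonStep]; ring

lemma comp_newtonStep_expansion
    (hg : (fun x => g x - a * (1 + 2 * c₂ * (x - α) + 3 * c₃ * (x - α) ^ 2))
      =O[𝓝 α] fun x => (x - α) ^ 3)
    (hy : (fun x => newtonStep f g x - α - c₂ * (x - α) ^ 2) =O[𝓝 α] fun x => (x - α) ^ 3) :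
    (fun x => g (newtonStep f g x) - a * (1 + 2 * c₂ ^ 2 * (x - α) ^ 2))
      =O[𝓝 α] fun x => (x - α) ^ 3 := by
  have hy₂ : (fun x => newtonStep f g x - α) =O[𝓝 α] fun x => (x - α) ^ 2 :=
    ((hy.trans (isBigO_sub_pow_of_le (by norm_num))).add
      ((isBigO_refl _ _).const_mul_left c₂)).congr_left fun x => by ring
  have hy_tendsto : Tendsto (newtonStep f g) (𝓝 α) (𝓝 α) :=
    tendsto_of_isBigO_sub_pow (P := fun _ => α) two_ne_zero (by fun_prop) hy₂
  have hg₁ : (fun z => g z - a * (1 + 2 * c₂ * (z - α))) =O[𝓝 α] fun z => (z - α) ^ 2 :=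
    ((hg.trans (isBigO_sub_pow_of_le (by norm_num))).add
      ((isBigO_refl _ _).const_mul_left (3 * a * c₃))).congr_left fun x => by ring
  have hcomp : (fun x => g (newtonStep f g x) - a * (1 + 2 * c₂ * (newtonStep f g x - α)))
      =O[𝓝 α] fun x => (x - α) ^ 3 :=
    (hg₁.comp_tendsto hy_tendsto).trans
      (((hy₂.pow 2).congr_right fun x => by ring).trans
        (isBigO_sub_pow_of_le (m := 3) (n := 4) (by norm_num)))
  exact (hcomp.add (hy.const_mul_left (2 * a * c₂))).congr_left fun x => by ring

lemma newton_ratio_expansion {v : 𝕜 → 𝕜} (ha : a ≠ 0)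
    (hg : (fun x => g x - a * (1 + 2 * c₂ * (x - α) + 3 * c₃ * (x - α) ^ 2))
      =O[𝓝 α] fun x => (x - α) ^ 3)
    (hv : (fun x => v x - a * (1 + 2 * c₂ ^ 2 * (x - α) ^ 2)) =O[𝓝 α] fun x => (x - α) ^ 3) :
    (fun x => v x / g x - (1 - 2 * c₂ * (x - α) + (6 * c₂ ^ 2 - 3 * c₃) * (x - α) ^ 2))
      =O[𝓝 α] fun x => (x - α) ^ 3 := by
  set T : 𝕜 → 𝕜 := fun x => 1 - 2 * c₂ * (x - α) + (6 * c₂ ^ 2 - 3 * c₃) * (x - α) ^ 2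
  have hT : T =O[𝓝 α] fun _ => (1 : 𝕜) := (show ContinuousAt T α by fun_prop).tendsto.isBigO_one 𝕜
  have hpoly : (fun x => a * ((1 + 2 * c₂ ^ 2 * (x - α) ^ 2)
      - T x * (1 + 2 * c₂ * (x - α) + 3 * c₃ * (x - α) ^ 2))) =O[𝓝 α] fun x => (x - α) ^ 3 :=
    isBigO_sub_pow_of_eq_pow_mul
      (q := fun x => -3 * a * (4 * c₂ ^ 3 - 4 * c₂ * c₃ + c₃ * (6 * c₂ ^ 2 - 3 * c₃) * (x - α)))
      (by fun_prop) fun x => by ring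
  refine IsBigO.div_sub ha (tendsto_of_isBigO_sub_quadratic hg) ?_
  exact ((hv.sub ((hT.mul hg).congr_right fun x => one_mul _)).add hpoly).congr_left
    fun x => by ring

lemma weight_expansion [CharZero 𝕜] {t : 𝕜 → 𝕜} (γ : 𝕜)
    (ht : (fun x => t x - (1 - 2 * c₂ * (x - α) + (6 * c₂ ^ 2 - 3 * c₃) * (x - α) ^ 2))
      =O[𝓝 α] fun x => (x - α) ^ 3) :
    (fun x => (3 / 2 - t x / 2 + γ * (t x - 1) ^ 2)
        - (1 + c₂ * (x - α) + (4 * γ * c₂ ^ 2 - 3 * c₂ ^ 2 + 3 / 2 * c₃) * (x - α) ^ 2))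
      =O[𝓝 α] fun x => (x - α) ^ 3 := by
  set T : 𝕜 → 𝕜 := fun x => 1 - 2 * c₂ * (x - α) + (6 * c₂ ^ 2 - 3 * c₃) * (x - α) ^ 2
  have hT : ContinuousAt T α := by fun_prop
  have ht_tendsto : Tendsto t (𝓝 α) (𝓝 (T α)) := tendsto_of_isBigO_sub_pow three_ne_zero hT ht
  have hslope : (fun x => -1 / 2 + γ * (t x + T x - 2)) =O[𝓝 α] fun _ => (1 : 𝕜) :=
    (((ht_tendsto.add hT.tendsto).sub_const 2).const_mul γ).const_add (-1 / 2) |>.isBigO_one 𝕜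
  have hpoly : (fun x => (3 / 2 - T x / 2 + γ * (T x - 1) ^ 2)
      - (1 + c₂ * (x - α) + (4 * γ * c₂ ^ 2 - 3 * c₂ ^ 2 + 3 / 2 * c₃) * (x - α) ^ 2))
      =O[𝓝 α] fun x => (x - α) ^ 3 :=
    isBigO_sub_pow_of_eq_pow_mul
      (q := fun x => γ * (6 * c₂ ^ 2 - 3 * c₃) * ((6 * c₂ ^ 2 - 3 * c₃) * (x - α) - 4 * c₂))
      (by fun_prop) fun x => by ring
  exact (((ht.mul hslope).congr_right fun x => mul_one _).add hpoly).congr_left fun x => by ring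

lemma iteration_expansion [CharZero 𝕜] {u w : 𝕜 → 𝕜} (γ : 𝕜)
    (hu : (fun x => u x - ((x - α) - c₂ * (x - α) ^ 2 + 2 * (c₂ ^ 2 - c₃) * (x - α) ^ 3))
      =O[𝓝 α] fun x => (x - α) ^ 4)
    (hw : (fun x => w x
        - (1 + c₂ * (x - α) + (4 * γ * c₂ ^ 2 - 3 * c₂ ^ 2 + 3 / 2 * c₃) * (x - α) ^ 2))
      =O[𝓝 α] fun x => (x - α) ^ 3) :
    (fun x => x - w x * u x - α - 1 / 2 * ((4 - 8 * γ) * c₂ ^ 2 + c₃) * (x - α) ^ 3)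
      =O[𝓝 α] fun x => (x - α) ^ 4 := by
  set U : 𝕜 → 𝕜 := fun x => (x - α) - c₂ * (x - α) ^ 2 + 2 * (c₂ ^ 2 - c₃) * (x - α) ^ 3
  set W : 𝕜 → 𝕜 := fun x =>
    1 + c₂ * (x - α) + (4 * γ * c₂ ^ 2 - 3 * c₂ ^ 2 + 3 / 2 * c₃) * (x - α) ^ 2
  have hu₁ : u =O[𝓝 α] fun x => (x - α) ^ 1 :=
    ((hu.trans (isBigO_sub_pow_of_le (by norm_num))).add
      (isBigO_sub_pow_of_eq_pow_mul (r := U)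
        (q := fun x => 1 - c₂ * (x - α) + 2 * (c₂ ^ 2 - c₃) * (x - α) ^ 2)
        (by fun_prop) fun x => by ring)).congr_left fun x => by ring
  have hW : W =O[𝓝 α] fun _ => (1 : 𝕜) := (show ContinuousAt W α by fun_prop).tendsto.isBigO_one 𝕜
  have hpoly : (fun x => (x - α) - W x * U x - 1 / 2 * ((4 - 8 * γ) * c₂ ^ 2 + c₃) * (x - α) ^ 3)
      =O[𝓝 α] fun x => (x - α) ^ 4 := by
    refine isBigO_sub_pow_of_eq_pow_mul
      (q := fun x => -(c₂ * (2 * (c₂ ^ 2 - c₃) - (4 * γ * c₂ ^ 2 - 3 * c₂ ^ 2 + 3 / 2 * c₃))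
        + 2 * (4 * γ * c₂ ^ 2 - 3 * c₂ ^ 2 + 3 / 2 * c₃) * (c₂ ^ 2 - c₃) * (x - α)))
      (by fun_prop) fun x => by ring
  exact (((hw.mul hu₁).congr_right fun x => by ring).neg_left.sub
    ((hW.mul hu).congr_right fun x => one_mul _) |>.add hpoly).congr_left fun x => by ring

theorem third_order_of_expansions [CharZero 𝕜] (γ : 𝕜) (ha : a ≠ 0)
    (hf : (fun x => f x - a * ((x - α) + c₂ * (x - α) ^ 2 + c₃ * (x - α) ^ 3))
      =O[𝓝 α] fun x => (x - α) ^ 4)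
    (hg : (fun x => g x - a * (1 + 2 * c₂ * (x - α) + 3 * c₃ * (x - α) ^ 2))
      =O[𝓝 α] fun x => (x - α) ^ 3) :
    (fun x => x - (3 / 2 - g (newtonStep f g x) / (2 * g x)
        + γ * (g (newtonStep f g x) / g x - 1) ^ 2) * (f x / g x)
        - α - 1 / 2 * ((4 - 8 * γ) * c₂ ^ 2 + c₃) * (x - α) ^ 3)
      =O[𝓝 α] fun x => (x - α) ^ 4 := by
  have hu := newton_correction_expansion ha hf hg
  have hv := comp_newtonStep_expansion hg (newtonStep_expansion hu)
  have hw := weight_expansion γ (newton_ratio_expansion ha hg hv)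
  exact (iteration_expansion γ hu hw).congr_left fun x => by ring

end NewtonExpansions

section TaylorAtSimpleRoot

variable {𝕜 : Type*} [NontriviallyNormedField 𝕜] [CompleteSpace 𝕜] [CharZero 𝕜] {f : 𝕜 → 𝕜}
  {α : 𝕜}

lemma AnalyticAt.cubic_expansion_of_root (hf : AnalyticAt 𝕜 f α) (hroot : f α = 0)
    (hder : deriv f α ≠ 0) :
    (fun x => f x - deriv f α * ((x - α)
        + iteratedDeriv 2 f α / (2 ! * deriv f α) * (x - α) ^ 2
        + iteratedDeriv 3 f α / (3 ! * deriv f α) * (x - α) ^ 3))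
      =O[𝓝 α] fun x => (x - α) ^ 4 := by
  refine (hf.isBigO_sub_taylor 4).congr_left fun x => ?_
  simp only [Finset.sum_range_succ, Finset.sum_range_zero, iteratedDeriv_zero, iteratedDeriv_one,
    hroot]
  field_simp
  ring

lemma AnalyticAt.deriv_quadratic_expansion (hf : AnalyticAt 𝕜 f α) (hder : deriv f α ≠ 0) :
    (fun x => deriv f x - deriv f α * (1
        + 2 * (iteratedDeriv 2 f α / (2 ! * deriv f α)) * (x - α)
        + 3 * (iteratedDeriv 3 f α / (3 ! * deriv f α)) * (x - α) ^ 2))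
      =O[𝓝 α] fun x => (x - α) ^ 3 := by
  refine (hf.deriv.isBigO_sub_taylor 3).congr_left fun x => ?_
  simp only [Finset.sum_range_succ, Finset.sum_range_zero, iteratedDeriv_zero]
  simp only [← iteratedDeriv_succ']
  field_simp
  ring

end TaylorAtSimpleRoot

/-- The one-parameter family
`F(x) = x - [3/2 - f'(y)/(2f'(x)) + γ(f'(y)/f'(x) - 1)²]·f(x)/f'(x)`,
`y(x) = x - f(x)/f'(x)`, is of third order for every `γ ∈ ℝ`:
`F(x) - α = (1/2)·[(4 - 8γ)c₂² + c₃]·(x - α)³ + O((x - α)⁴)` as `x → α`. -/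
theorem third_order_one_parameter_family
    (f : ℝ → ℝ) (α γ : ℝ)
    (hf : AnalyticAt ℝ f α) (hroot : f α = 0) (hder : deriv f α ≠ 0) :
    let c₂ := iteratedDeriv 2 f α / ((Nat.factorial 2 : ℝ) * deriv f α)
    let c₃ := iteratedDeriv 3 f α / ((Nat.factorial 3 : ℝ) * deriv f α)
    let y : ℝ → ℝ := fun x => x - f x / deriv f x
    let F : ℝ → ℝ := fun x =>
      x - (3/2 - deriv f (y x) / (2 * deriv f x)
            + γ * (deriv f (y x) / deriv f x - 1)^2) * (f x / deriv f x)
    (fun x => F x - α - (1/2) * ((4 - 8*γ) * c₂^2 + c₃) * (x - α)^3)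
      =O[nhds α] (fun x => (x - α)^4) :=
  third_order_of_expansions γ hder (hf.cubic_expansion_of_root hroot hder)
    (hf.deriv_quadratic_expansion hder)
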